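/- arXiv:2207.02846 — 2 statements merged into one kernel-verified Lean document; each statement's English description precedes it below -/
import Mathlib

section
/- With e ∈ ℝⁿ sorted ascending (indices 2,…,n used for neighbors, e_1 corresponding to the diagonal being excluded), the solution z of the simplex projection has exactly c nonzero entries (‖z‖₀ = c) if and only if γ satisfies (c/2)e_{c+1} − (1/2)∑_{j=2}^{c+1} e_j − α < γ ≤ (c/2)e_{c+2} − (1/2)∑_{j=2}^{c+1} e_j − α. -/
/-!
Write `v j = z j + e j / (2(α + γ))`. Moving mass `ε` from a support coordinate `j` to an
admissible `i` changes `∑ v²` by `2ε (v i - v j) + 2ε²`, so at the minimizer every support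
coordinate carries the smallest value of `v`. As `e` is sorted, the support is then an initial
segment `{2, …, k + 1}`, and summing `v` over it gives `k v = 1 + ∑_{j=2}^{k+1} e j / (2(α + γ))`.
The conditions `z (k + 1) > 0` and `v ≤ v (k + 2) = e (k + 2) / (2(α + γ))` are exactly the two
bounds on `γ` for `c = k`; since `k e (k + 1) - ∑_{j=2}^{k+1} e j` is monotone in `k`, these
intervals for different `k` are disjoint, which gives the converse.
-/

open Finset

section MassTransfer

variable {ι : Type*} [DecidableEq ι] {s : Finset ι} {i j : ι}

lemma sum_add_single_sub_single (hi : i ∈ s) (hj : j ∈ s) (z : ι → ℝ) (ε : ℝ) :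
    ∑ t ∈ s, (z + Pi.single i ε - Pi.single j ε : ι → ℝ) t = ∑ t ∈ s, z t := by
  simp [sum_add_distrib, sum_sub_distrib, sum_pi_single', hi, hj]

lemma sum_sq_add_single_sub_single (hi : i ∈ s) (hj : j ∈ s) (hij : i ≠ j) (z a : ι → ℝ)
    (ε : ℝ) :
    ∑ t ∈ s, ((z + Pi.single i ε - Pi.single j ε : ι → ℝ) t + a t) ^ 2 =
      ∑ t ∈ s, (z t + a t) ^ 2 + 2 * ε * ((z i + a i) - (z j + a j)) + 2 * ε ^ 2 := by
  have hj' : j ∈ s.erase i := mem_erase.2 ⟨hij.symm, hj⟩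
  rw [← add_sum_erase s _ hi, ← add_sum_erase _ _ hj', ← add_sum_erase s _ hi,
    ← add_sum_erase _ _ hj']
  have hrest : ∑ t ∈ (s.erase i).erase j,
      ((z + Pi.single i ε - Pi.single j ε : ι → ℝ) t + a t) ^ 2 =
        ∑ t ∈ (s.erase i).erase j, (z t + a t) ^ 2 := by
    refine sum_congr rfl fun t ht => ?_
    obtain ⟨htj, hti, -⟩ : t ≠ j ∧ t ≠ i ∧ t ∈ s := by simpa using ht
    simp [hti, htj]
  rw [hrest]
  simp only [Pi.add_apply, Pi.sub_apply, Pi.single_eq_same, Pi.single_eq_of_ne hij,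
    Pi.single_eq_of_ne hij.symm]
  ring

lemma le_of_forall_sum_sq_le_single (hi : i ∈ s) (hj : j ∈ s) (hij : i ≠ j) {z a : ι → ℝ}
    (hzj : 0 < z j)
    (hmin : ∀ ε, 0 < ε → ε ≤ z j → ∑ t ∈ s, (z t + a t) ^ 2 ≤
      ∑ t ∈ s, ((z + Pi.single i ε - Pi.single j ε : ι → ℝ) t + a t) ^ 2) :
    z j + a j ≤ z i + a i := by
  have hstep : ∀ ε, 0 < ε → ε ≤ z j → z j + a j ≤ z i + a i + ε := by
    intro ε hε hεz
    have h := hmin ε hε hεz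
    rw [sum_sq_add_single_sub_single hi hj hij] at h
    nlinarith
  refine le_of_forall_pos_le_add fun ε hε => ?_
  calc z j + a j ≤ z i + a i + min ε (z j) := hstep _ (lt_min hε hzj) (min_le_right _ _)
    _ ≤ z i + a i + ε := by gcongr; exact min_le_left _ _

end MassTransfer

/-- Half of it is the paper's bound `(k/2) e_{k+1} - ½ ∑_{j=2}^{k+1} e_j` on `α + γ`. -/
noncomputable def supportThreshold (a : ℕ → ℝ) (k : ℕ) : ℝ :=
  k * a (k + 1) - ∑ j ∈ Icc 2 (k + 1), a j

lemma supportThreshold_succ (a : ℕ → ℝ) (k : ℕ) :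
    supportThreshold a (k + 1) = k * a (k + 2) - ∑ j ∈ Icc 2 (k + 1), a j := by
  rw [supportThreshold, sum_Icc_succ_top (by omega : 2 ≤ k + 2)]
  push_cast
  ring

lemma supportThreshold_div_const (a : ℕ → ℝ) (b : ℝ) (k : ℕ) :
    supportThreshold (fun j => a j / b) k = supportThreshold a k / b := by
  rw [supportThreshold, supportThreshold, ← sum_div]
  ring

lemma monotoneOn_supportThreshold {n : ℕ} {a : ℕ → ℝ} (ha : MonotoneOn a (Set.Icc 2 n)) :
    MonotoneOn (supportThreshold a) (Set.Iio n) := by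
  refine monotoneOn_of_le_add_one Set.ordConnected_Iio fun m _ _ hm => ?_
  have hm : m + 2 ≤ n := Set.mem_Iio.1 hm
  rw [supportThreshold_succ, supportThreshold]
  rcases Nat.eq_zero_or_pos m with rfl | hm0
  · simp
  · have : a (m + 1) ≤ a (m + 2) := ha ⟨by omega, by omega⟩ ⟨by omega, hm⟩ (by omega)
    gcongr

/-- `z` is a Euclidean projection of `-a` onto the simplex
`{w ≥ 0, w 1 = 0, ∑_{j=1}^n w j = 1}`. -/
structure IsSimplexProjection (n : ℕ) (a z : ℕ → ℝ) : Prop where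
  nonneg : ∀ j, 0 ≤ z j
  sum_eq_one : ∑ j ∈ Icc 1 n, z j = 1
  apply_one : z 1 = 0
  sum_sq_le : ∀ w : ℕ → ℝ, ∑ j ∈ Icc 1 n, w j = 1 → (∀ j, 0 ≤ w j) → w 1 = 0 →
    ∑ j ∈ Icc 1 n, (z j + a j) ^ 2 ≤ ∑ j ∈ Icc 1 n, (w j + a j) ^ 2

namespace IsSimplexProjection

variable {n : ℕ} {a z : ℕ → ℝ}

lemma add_le_add_of_pos (hz : IsSimplexProjection n a z) {i j : ℕ} (hi : 2 ≤ i) (hin : i ≤ n)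
    (hj : 2 ≤ j) (hjn : j ≤ n) (hzj : 0 < z j) : z j + a j ≤ z i + a i := by
  rcases eq_or_ne i j with rfl | hij
  · exact le_rfl
  have hi' : i ∈ Icc 1 n := mem_Icc.2 ⟨by omega, hin⟩
  have hj' : j ∈ Icc 1 n := mem_Icc.2 ⟨by omega, hjn⟩
  refine le_of_forall_sum_sq_le_single hi' hj' hij hzj fun ε hε hεz => hz.sum_sq_le _ ?_ ?_ ?_
  · rw [sum_add_single_sub_single hi' hj', hz.sum_eq_one]
  · intro t
    have := hz.nonneg t
    simp only [Pi.add_apply, Pi.sub_apply, Pi.single_apply]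
    split_ifs <;> subst_vars <;> first | omega | linarith
  · simp [Pi.single_eq_of_ne (show 1 ≠ i by omega), Pi.single_eq_of_ne (show 1 ≠ j by omega),
      hz.apply_one]

lemma pos_of_le (hz : IsSimplexProjection n a z) (ha : MonotoneOn a (Set.Icc 2 n)) {i j : ℕ}
    (hi : 2 ≤ i) (hij : i ≤ j) (hjn : j ≤ n) (hzj : 0 < z j) : 0 < z i := by
  have hlevel := hz.add_le_add_of_pos hi (hij.trans hjn) (hi.trans hij) hjn hzj
  have hsort : a i ≤ a j := ha ⟨hi, hij.trans hjn⟩ ⟨hi.trans hij, hjn⟩ hij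
  linarith

lemma exists_pos (hz : IsSimplexProjection n a z) : ∃ j, 2 ≤ j ∧ j ≤ n ∧ 0 < z j := by
  by_contra! h
  have hzero : ∑ j ∈ Icc 1 n, z j = 0 := by
    refine sum_eq_zero fun j hj => ?_
    obtain ⟨hj1, hjn⟩ := mem_Icc.1 hj
    rcases hj1.eq_or_lt with rfl | hj2
    · exact hz.apply_one
    · exact le_antisymm (h j hj2 hjn) (hz.nonneg j)
  linarith [hz.sum_eq_one]

lemma exists_support_eq_Icc (hz : IsSimplexProjection n a z) (ha : MonotoneOn a (Set.Icc 2 n)) :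
    ∃ k, k + 1 ≤ n ∧ ∀ j, 2 ≤ j → j ≤ n → (0 < z j ↔ j ≤ k + 1) := by
  set support := (Icc 2 n).filter fun j => 0 < z j
  have hne : support.Nonempty := by
    obtain ⟨j, hj2, hjn, hzj⟩ := hz.exists_pos
    exact ⟨j, mem_filter.2 ⟨mem_Icc.2 ⟨hj2, hjn⟩, hzj⟩⟩
  obtain ⟨hM, hzM⟩ := mem_filter.1 (support.max'_mem hne)
  obtain ⟨hM2, hMn⟩ := mem_Icc.1 hM
  refine ⟨support.max' hne - 1, by omega, fun j hj2 hjn => ⟨fun hzj => ?_, fun hjM => ?_⟩⟩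
  · have := support.le_max' j (mem_filter.2 ⟨mem_Icc.2 ⟨hj2, hjn⟩, hzj⟩)
    omega
  · exact hz.pos_of_le ha hj2 (by omega) hMn hzM

/-- On the support all levels `z j + a j` coincide; summing them gives this identity. -/
lemma card_mul_add_eq (hz : IsSimplexProjection n a z) {k : ℕ} (hkn : k + 1 ≤ n)
    (hsupp : ∀ j, 2 ≤ j → j ≤ n → (0 < z j ↔ j ≤ k + 1)) :
    k * (z (k + 1) + a (k + 1)) = 1 + ∑ j ∈ Icc 2 (k + 1), a j := by
  have hsum : ∑ j ∈ Icc 2 (k + 1), z j = 1 := by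
    rw [← hz.sum_eq_one]
    refine sum_subset (fun j hj => ?_) fun j hj hj' => ?_
    · simp only [mem_Icc] at hj ⊢; omega
    · obtain ⟨hj1, hjn⟩ := mem_Icc.1 hj
      rcases hj1.eq_or_lt with rfl | hj2
      · exact hz.apply_one
      · have : ¬ 0 < z j := fun h => hj' (mem_Icc.2 ⟨hj2, (hsupp j hj2 hjn).1 h⟩)
        exact le_antisymm (not_lt.1 this) (hz.nonneg j)
  have hlevel : ∀ j ∈ Icc 2 (k + 1), z j + a j = z (k + 1) + a (k + 1) := by
    intro j hj
    obtain ⟨hj2, hjk⟩ := mem_Icc.1 hj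
    have hpos : ∀ i, 2 ≤ i → i ≤ k + 1 → 0 < z i := fun i hi hik => (hsupp i hi (by omega)).2 hik
    exact le_antisymm
      (hz.add_le_add_of_pos (by omega) hkn hj2 (by omega) (hpos j hj2 hjk))
      (hz.add_le_add_of_pos hj2 (by omega) (by omega) hkn (hpos _ (by omega) le_rfl))
  have := sum_congr rfl hlevel
  rwa [sum_add_distrib, hsum, sum_const, Nat.card_Icc, nsmul_eq_mul,
    show k + 1 + 1 - 2 = k by omega, eq_comm] at this

lemma one_le_of_support_eq (hz : IsSimplexProjection n a z) {k : ℕ}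
    (hsupp : ∀ j, 2 ≤ j → j ≤ n → (0 < z j ↔ j ≤ k + 1)) : 1 ≤ k := by
  obtain ⟨j, hj2, hjn, hzj⟩ := hz.exists_pos
  have := (hsupp j hj2 hjn).1 hzj
  omega

lemma supportThreshold_lt_one (hz : IsSimplexProjection n a z) {k : ℕ} (hkn : k + 1 ≤ n)
    (hsupp : ∀ j, 2 ≤ j → j ≤ n → (0 < z j ↔ j ≤ k + 1)) :
    supportThreshold a k < 1 := by
  have hk1 := hz.one_le_of_support_eq hsupp
  have hzk : 0 < z (k + 1) := (hsupp _ (by omega) hkn).2 le_rfl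
  have hk : (0 : ℝ) < k := by exact_mod_cast (show 0 < k by omega)
  have := hz.card_mul_add_eq hkn hsupp
  rw [supportThreshold]
  linarith [mul_pos hk hzk]

lemma one_le_supportThreshold_succ (hz : IsSimplexProjection n a z) {k : ℕ} (hk2 : k + 2 ≤ n)
    (hsupp : ∀ j, 2 ≤ j → j ≤ n → (0 < z j ↔ j ≤ k + 1)) : 1 ≤ supportThreshold a (k + 1) := by
  have hk1 := hz.one_le_of_support_eq hsupp
  have hzk : 0 < z (k + 1) := (hsupp _ (by omega) (by omega)).2 le_rfl
  have hlevel := hz.add_le_add_of_pos (i := k + 2) (by omega) hk2 (by omega) (by omega) hzk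
  have hz2 : z (k + 2) = 0 :=
    le_antisymm (not_lt.1 fun h => by have := (hsupp _ (by omega) hk2).1 h; omega) (hz.nonneg _)
  have := hz.card_mul_add_eq (by omega) hsupp
  rw [hz2, zero_add] at hlevel
  rw [supportThreshold_succ]
  linarith [mul_le_mul_of_nonneg_left hlevel (Nat.cast_nonneg (α := ℝ) k)]

theorem support_eq_Icc_iff (hz : IsSimplexProjection n a z) (ha : MonotoneOn a (Set.Icc 2 n))
    {c : ℕ} (hc : c + 2 ≤ n) :
    (∀ j, 2 ≤ j → j ≤ n → (0 < z j ↔ j ≤ c + 1)) ↔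
      supportThreshold a c < 1 ∧ 1 ≤ supportThreshold a (c + 1) := by
  refine ⟨fun hsupp => ⟨hz.supportThreshold_lt_one (by omega) hsupp,
    hz.one_le_supportThreshold_succ hc hsupp⟩, fun ⟨hlt, hle⟩ => ?_⟩
  obtain ⟨k, hkn, hsupp⟩ := hz.exists_support_eq_Icc ha
  have hmono := monotoneOn_supportThreshold ha
  obtain hkc | rfl | hck := lt_trichotomy k c
  · have := hz.one_le_supportThreshold_succ (by omega) hsupp
    have := hmono (Set.mem_Iio.2 (by omega)) (Set.mem_Iio.2 (by omega)) (show k + 1 ≤ c by omega)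
    linarith
  · exact hsupp
  · have := hz.supportThreshold_lt_one hkn hsupp
    have := hmono (Set.mem_Iio.2 (by omega)) (Set.mem_Iio.2 hkn) (show c + 1 ≤ k by omega)
    linarith

end IsSimplexProjection

theorem stmt_11_general (n : ℕ) (e : ℕ → ℝ) (α γ : ℝ) (hpos : 0 < α + γ)
    (hsort : ∀ i j : ℕ, 2 ≤ i → i ≤ j → j ≤ n → e i ≤ e j)
    (c : ℕ) (hc2 : c ≤ n - 2)
    (z : ℕ → ℝ) (hz1 : ∑ j ∈ Finset.Icc 1 n, z j = 1)
    (hz0 : ∀ j, 0 ≤ z j) (hzdiag : z 1 = 0)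
    (hmin : ∀ w : ℕ → ℝ, (∑ j ∈ Finset.Icc 1 n, w j = 1) → (∀ j, 0 ≤ w j) → w 1 = 0 →
      (1 : ℝ) / 2 * ∑ j ∈ Finset.Icc 1 n, (z j + e j / (2 * (α + γ))) ^ 2
        ≤ (1 : ℝ) / 2 * ∑ j ∈ Finset.Icc 1 n, (w j + e j / (2 * (α + γ))) ^ 2) :
    (∀ j : ℕ, 2 ≤ j → j ≤ n → (0 < z j ↔ j ≤ c + 1)) ↔
    ((c : ℝ) / 2 * e (c + 1) - 1 / 2 * ∑ j ∈ Finset.Icc 2 (c + 1), e j - α < γ ∧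
      γ ≤ (c : ℝ) / 2 * e (c + 2) - 1 / 2 * ∑ j ∈ Finset.Icc 2 (c + 1), e j - α) := by
  have hB : 0 < 2 * (α + γ) := by linarith
  have hz : IsSimplexProjection n (fun j => e j / (2 * (α + γ))) z :=
    ⟨hz0, hz1, hzdiag, fun w h1 h0 h1' => le_of_mul_le_mul_left (hmin w h1 h0 h1') one_half_pos⟩
  have ha : MonotoneOn (fun j => e j / (2 * (α + γ))) (Set.Icc 2 n) :=
    fun i hi j hj hij => div_le_div_of_nonneg_right (hsort i j hi.1 hij hj.2) hB.le
  obtain ⟨j, hj2, hjn, -⟩ := hz.exists_pos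
  rw [hz.support_eq_Icc_iff ha (by omega), supportThreshold_div_const,
    supportThreshold_div_const, div_lt_one hB, one_le_div hB, supportThreshold_succ,
    supportThreshold]
  constructor <;> rintro ⟨h1, h2⟩ <;> constructor <;> linarith

/-- For min_z ½‖z + e/(2(α+γ))‖² s.t. zᵀ1 = 1, z ≥ 0, z₁ = 0, with
e₂ ≤ e₃ ≤ ⋯ ≤ e_n: a minimizer z has exactly c nonzero entries (the support being
{2,…,c+1}) iff (c/2)e_{c+1} − (1/2)∑_{j=2}^{c+1} e_j − α < γ ≤
(c/2)e_{c+2} − (1/2)∑_{j=2}^{c+1} e_j − α. -/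
theorem stmt_11 (n : ℕ) (e : ℕ → ℝ) (α γ : ℝ) (hpos : 0 < α + γ)
    (hsort : ∀ i j : ℕ, 2 ≤ i → i ≤ j → j ≤ n → e i ≤ e j)
    (c : ℕ) (hc1 : 1 ≤ c) (hc2 : c ≤ n - 2)
    (z : ℕ → ℝ) (hz1 : ∑ j ∈ Finset.Icc 1 n, z j = 1)
    (hz0 : ∀ j, 0 ≤ z j) (hzdiag : z 1 = 0)
    (hmin : ∀ w : ℕ → ℝ, (∑ j ∈ Finset.Icc 1 n, w j = 1) → (∀ j, 0 ≤ w j) → w 1 = 0 →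
      (1 : ℝ) / 2 * ∑ j ∈ Finset.Icc 1 n, (z j + e j / (2 * (α + γ))) ^ 2
        ≤ (1 : ℝ) / 2 * ∑ j ∈ Finset.Icc 1 n, (w j + e j / (2 * (α + γ))) ^ 2) :
    (∀ j : ℕ, 2 ≤ j → j ≤ n → (0 < z j ↔ j ≤ c + 1)) ↔
    ((c : ℝ) / 2 * e (c + 1) - 1 / 2 * ∑ j ∈ Finset.Icc 2 (c + 1), e j - α < γ ∧
      γ ≤ (c : ℝ) / 2 * e (c + 2) - 1 / 2 * ∑ j ∈ Finset.Icc 2 (c + 1), e j - α) :=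
  stmt_11_general n e α γ hpos hsort c hc2 z hz1 hz0 hzdiag hmin
end

section
/- Setting γ = (c/2)e_{c+2} − (1/2)∑_{j=2}^{c+1} e_j − α (the maximal admissible value) and assuming e_{c+2} > e_{c+1}, the optimal simplex projection has the closed form z_j = (e_{c+2} − e_{j+1}) / (c·e_{c+2} − ∑_{h=2}^{c+1} e_h) for j ≤ c and z_j = 0 for j > c, and these values are nonnegative and sum to 1. -/
/-!
The optimality of the closed form is the KKT condition for projecting `-a`, where
`a_j = e_{j+1} / (2 (α + γ))`, onto the simplex: `z + a` is constant (the water level `τ = e_{c+2} / D`) on the support of `z`, and `a ≥ τ`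
off it. For such a `z`, convexity of the square gives
`(w + a)² - (z + a)² ≥ 2 τ (w - z)` termwise for every `w ≥ 0`, and the right-hand sides sum
to zero over the simplex. The choice `γ = (c/2) e_{c+2} - ½ ∑ e_h - α` is exactly what makes
`2 (α + γ)` equal to the normalising denominator `D = c e_{c+2} - ∑_{h=2}^{c+1} e_h`.
-/

open Finset

theorem two_mul_sub_le_sq_add_sub_sq_add {z w a τ : ℝ} (hw : 0 ≤ w)
    (hz : z + a = τ ∨ (z = 0 ∧ τ ≤ a)) :
    2 * τ * (w - z) ≤ (w + a) ^ 2 - (z + a) ^ 2 := by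
  rcases hz with hlevel | ⟨rfl, hτa⟩
  · rw [← hlevel]
    linarith [sq_nonneg (w - z)]
  · nlinarith [mul_le_mul_of_nonneg_right hτa hw]

theorem sum_sq_add_le_of_waterLevel {ι : Type*} {s : Finset ι} {z w a : ι → ℝ} {τ : ℝ}
    (hz : ∀ j ∈ s, z j + a j = τ ∨ (z j = 0 ∧ τ ≤ a j))
    (hsum : ∑ j ∈ s, z j = ∑ j ∈ s, w j) (hw : ∀ j ∈ s, 0 ≤ w j) :
    ∑ j ∈ s, (z j + a j) ^ 2 ≤ ∑ j ∈ s, (w j + a j) ^ 2 := by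
  have hzero : ∑ j ∈ s, 2 * τ * (w j - z j) = 0 := by
    rw [← mul_sum, sum_sub_distrib, hsum, sub_self, mul_zero]
  have hle : ∑ j ∈ s, 2 * τ * (w j - z j) ≤ ∑ j ∈ s, ((w j + a j) ^ 2 - (z j + a j) ^ 2) :=
    sum_le_sum fun j hj => two_mul_sub_le_sq_add_sub_sq_add (hw j hj) (hz j hj)
  rw [hzero, sum_sub_distrib] at hle
  linarith

noncomputable def gapWeight (e : ℕ → ℝ) (c : ℕ) (D : ℝ) (j : ℕ) : ℝ :=
  if 1 ≤ j ∧ j ≤ c then (e (c + 2) - e (j + 1)) / D else 0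

section gapWeight

variable {e : ℕ → ℝ} {c n : ℕ} {D : ℝ}

theorem gapWeight_nonneg (hmono : MonotoneOn e (Set.Icc 2 n)) (hcn : c + 2 ≤ n) (hD : 0 ≤ D)
    (j : ℕ) : 0 ≤ gapWeight e c D j := by
  unfold gapWeight
  split_ifs with hj
  · exact div_nonneg (sub_nonneg.2 <| hmono ⟨by omega, by omega⟩ ⟨by omega, hcn⟩ (by omega)) hD
  · exact le_rfl

theorem sum_Icc_gapWeight {m : ℕ} (hcm : c ≤ m)
    (hD : D = c * e (c + 2) - ∑ h ∈ Icc 2 (c + 1), e h) (hD0 : D ≠ 0) :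
    ∑ j ∈ Icc 1 m, gapWeight e c D j = 1 := by
  have hsupport : ∑ j ∈ Icc 1 m, gapWeight e c D j = ∑ j ∈ Icc 1 c, gapWeight e c D j := by
    refine (sum_subset (Icc_subset_Icc le_rfl hcm) fun j hjm hjc => ?_).symm
    simp only [mem_Icc] at hjm hjc
    simp only [gapWeight, if_neg hjc]
  have hshift : ∑ j ∈ Icc 1 c, e (j + 1) = ∑ h ∈ Icc 2 (c + 1), e h := by
    rw [← map_add_right_Icc 1 c 1, sum_map]
    rfl
  have hnum : ∑ j ∈ Icc 1 c, (e (c + 2) - e (j + 1)) = D := by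
    rw [sum_sub_distrib, sum_const, Nat.card_Icc, Nat.add_sub_cancel, nsmul_eq_mul, hshift, hD]
  rw [hsupport, sum_congr rfl fun j hj => by rw [gapWeight, if_pos (mem_Icc.1 hj)], ← sum_div,
    hnum, div_self hD0]

theorem gapWeight_waterLevel (hmono : MonotoneOn e (Set.Icc 2 n)) (hD : 0 < D) {j : ℕ}
    (hj : j ∈ Icc 1 (n - 1)) :
    gapWeight e c D j + e (j + 1) / D = e (c + 2) / D ∨
      (gapWeight e c D j = 0 ∧ e (c + 2) / D ≤ e (j + 1) / D) := by
  rw [mem_Icc] at hj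
  by_cases hjc : j ≤ c
  · left
    rw [gapWeight, if_pos ⟨hj.1, hjc⟩, ← add_div, sub_add_cancel]
  · right
    refine ⟨if_neg (by omega), div_le_div_of_nonneg_right ?_ hD.le⟩
    exact hmono ⟨by omega, by omega⟩ ⟨by omega, by omega⟩ (by omega)

end gapWeight

theorem stmt_12_general (n : ℕ) (e : ℕ → ℝ)
    (hsort : ∀ i j : ℕ, 2 ≤ i → i ≤ j → j ≤ n → e i ≤ e j)
    (c : ℕ) (hcn : c + 2 ≤ n)
    (α γ : ℝ)
    (hγ : γ = (c : ℝ) / 2 * e (c + 2) - 1 / 2 * ∑ j ∈ Finset.Icc 2 (c + 1), e j - α)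
    (hpos : 0 < α + γ) :
    let zstar : ℕ → ℝ := fun j =>
      if 1 ≤ j ∧ j ≤ c then
        (e (c + 2) - e (j + 1)) / ((c : ℝ) * e (c + 2) - ∑ h ∈ Finset.Icc 2 (c + 1), e h)
      else 0
    (∑ j ∈ Finset.Icc 1 (n - 1), zstar j = 1) ∧
    (∀ j, 0 ≤ zstar j) ∧
    (∀ w : ℕ → ℝ, (∑ j ∈ Finset.Icc 1 (n - 1), w j = 1) → (∀ j, 0 ≤ w j) →
      (1 : ℝ) / 2 * ∑ j ∈ Finset.Icc 1 (n - 1), (zstar j + e (j + 1) / (2 * (α + γ))) ^ 2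
        ≤ (1 : ℝ) / 2 * ∑ j ∈ Finset.Icc 1 (n - 1), (w j + e (j + 1) / (2 * (α + γ))) ^ 2) := by
  intro zstar
  set D : ℝ := (c : ℝ) * e (c + 2) - ∑ h ∈ Finset.Icc 2 (c + 1), e h with hD
  have hDγ : 2 * (α + γ) = D := by rw [hγ, hD]; ring
  have hDpos : 0 < D := by linarith
  have hmono : MonotoneOn e (Set.Icc 2 n) := fun i hi j hj hij => hsort i j hi.1 hij hj.2
  have hsum : ∑ j ∈ Icc 1 (n - 1), gapWeight e c D j = 1 := sum_Icc_gapWeight (by omega) hD hDpos.ne'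
  show (∑ j ∈ Icc 1 (n - 1), gapWeight e c D j = 1) ∧ (∀ j, 0 ≤ gapWeight e c D j) ∧ _
  rw [hDγ]
  refine ⟨hsum, gapWeight_nonneg hmono hcn hDpos.le, fun w hw hw0 => ?_⟩
  refine mul_le_mul_of_nonneg_left ?_ (by norm_num)
  exact sum_sq_add_le_of_waterLevel (fun j hj => gapWeight_waterLevel hmono hDpos hj)
    (hsum.trans hw.symm) fun j _ => hw0 j

/-- With γ = (c/2)e_{c+2} − (1/2)∑_{j=2}^{c+1} e_j − α (the maximal admissible value)
and e_{c+2} > e_{c+1}, the simplex projection min_z ½‖z + e/(2(α+γ))‖² s.t. zᵀ1=1,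
z ≥ 0 (z indexed by the n−1 neighbors, z_j paired with e_{j+1}) is solved by the
closed form z_j = (e_{c+2} − e_{j+1})/(c·e_{c+2} − ∑_{h=2}^{c+1} e_h) for j ≤ c and
z_j = 0 for j > c; these values are nonnegative and sum to 1. -/
theorem stmt_12 (n : ℕ) (e : ℕ → ℝ)
    (hsort : ∀ i j : ℕ, 2 ≤ i → i ≤ j → j ≤ n → e i ≤ e j)
    (c : ℕ) (hc1 : 1 ≤ c) (hcn : c + 2 ≤ n) (hgap : e (c + 1) < e (c + 2))
    (α γ : ℝ)
    (hγ : γ = (c : ℝ) / 2 * e (c + 2) - 1 / 2 * ∑ j ∈ Finset.Icc 2 (c + 1), e j - α)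
    (hpos : 0 < α + γ) :
    let zstar : ℕ → ℝ := fun j =>
      if 1 ≤ j ∧ j ≤ c then
        (e (c + 2) - e (j + 1)) / ((c : ℝ) * e (c + 2) - ∑ h ∈ Finset.Icc 2 (c + 1), e h)
      else 0
    (∑ j ∈ Finset.Icc 1 (n - 1), zstar j = 1) ∧
    (∀ j, 0 ≤ zstar j) ∧
    (∀ w : ℕ → ℝ, (∑ j ∈ Finset.Icc 1 (n - 1), w j = 1) → (∀ j, 0 ≤ w j) →
      (1 : ℝ) / 2 * ∑ j ∈ Finset.Icc 1 (n - 1), (zstar j + e (j + 1) / (2 * (α + γ))) ^ 2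
        ≤ (1 : ℝ) / 2 * ∑ j ∈ Finset.Icc 1 (n - 1), (w j + e (j + 1) / (2 * (α + γ))) ^ 2) :=
  stmt_12_general n e hsort c hcn α γ hγ hpos
end
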